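/- Let φ : ℝ^n → ℂ^N be a smooth solution of the stationary nonlinear Dirac equation ℒ₋φ = 0, and let α₀ be a Hermitian N×N complex matrix anticommuting with β and with each α_j, 1 ≤ j ≤ n. Then ℒ₋(α₀φ) = -2ω α₀φ, one has 2Re(φ*βα₀φ) = 0 pointwise, and consequently also ℒ(α₀φ) = -2ω α₀φ; that is, α₀φ satisfies the eigenvalue equation for ℒ₋ and for ℒ with eigenvalue -2ω. -/

import Mathlib

open MeasureTheory

/-- Partial derivative of `f` in the `j`-th coordinate direction. -/
noncomputable def pderiv' {n : ℕ} {E : Type*} [NormedAddCommGroup E] [NormedSpace ℝ E]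
    (j : Fin n) (f : (Fin n → ℝ) → E) (x : Fin n → ℝ) : E :=
  fderiv ℝ f x (Pi.single j 1)

/-- `φ*βφ`, the (real) scalar density of the Soler model. -/
noncomputable def solerDensity {n N : ℕ} (β : Matrix (Fin N) (Fin N) ℂ)
    (φ : (Fin n → ℝ) → Fin N → ℂ) (x : Fin n → ℝ) : ℝ :=
  (dotProduct (star (φ x)) (β.mulVec (φ x))).re

/-- The operator `ℒ₋ψ = -i∑_j α_j ∂_jψ - ωψ + g(φ*βφ)βψ`. -/
noncomputable def diracLminus {n N : ℕ}
    (α : Fin n → Matrix (Fin N) (Fin N) ℂ) (β : Matrix (Fin N) (Fin N) ℂ)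
    (g : ℝ → ℝ) (ω : ℝ)
    (φ ψ : (Fin n → ℝ) → Fin N → ℂ) (x : Fin n → ℝ) : Fin N → ℂ :=
  (-Complex.I) • (∑ j : Fin n, (α j).mulVec (pderiv' j ψ x))
    - (ω : ℂ) • ψ x
    + (g (solerDensity β φ x) : ℂ) • β.mulVec (ψ x)

/-- The linearization `ℒψ = ℒ₋ψ + 2g'(φ*βφ) Re(φ*βψ) βφ`. -/
noncomputable def diracL {n N : ℕ}
    (α : Fin n → Matrix (Fin N) (Fin N) ℂ) (β : Matrix (Fin N) (Fin N) ℂ)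
    (g : ℝ → ℝ) (ω : ℝ)
    (φ ψ : (Fin n → ℝ) → Fin N → ℂ) (x : Fin n → ℝ) : Fin N → ℂ :=
  diracLminus α β g ω φ ψ x
    + ((2 * deriv g (solerDensity β φ x)
        * (dotProduct (star (φ x)) (β.mulVec (ψ x))).re : ℝ) : ℂ)
      • β.mulVec (φ x)

/-- if `ℒ₋φ = 0` and `α₀` is a Hermitian matrix anticommuting with
`β` and each `α_j`, then `ℒ₋(α₀φ) = -2ω α₀φ`, `2Re(φ*βα₀φ) = 0` pointwise, and
`ℒ(α₀φ) = -2ω α₀φ`. -/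
theorem stmt_10 (n N : ℕ) (hn : 1 ≤ n) (hN : 1 ≤ N)
    (α : Fin n → Matrix (Fin N) (Fin N) ℂ) (β : Matrix (Fin N) (Fin N) ℂ)
    (hαherm : ∀ j, (α j).IsHermitian) (hβherm : β.IsHermitian)
    (hαα : ∀ j k, α j * α k + α k * α j
      = if j = k then (2 : ℂ) • (1 : Matrix (Fin N) (Fin N) ℂ) else 0)
    (hαβ : ∀ j, α j * β + β * α j = 0)
    (hβ2 : β * β = 1)
    (g : ℝ → ℝ) (hg : ContDiff ℝ (⊤ : ℕ∞) g) (ω : ℝ)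
    (φ : (Fin n → ℝ) → Fin N → ℂ) (hφsmooth : ContDiff ℝ (⊤ : ℕ∞) φ)
    (hsol : ∀ x, diracLminus α β g ω φ φ x = 0)
    (α₀ : Matrix (Fin N) (Fin N) ℂ) (hα₀herm : α₀.IsHermitian)
    (hα₀β : α₀ * β + β * α₀ = 0)
    (hα₀α : ∀ j, α₀ * α j + α j * α₀ = 0) :
    (∀ x, diracLminus α β g ω φ (fun y => α₀.mulVec (φ y)) x
        = ((-2 * ω : ℝ) : ℂ) • α₀.mulVec (φ x))
    ∧ (∀ x, 2 * (dotProduct (star (φ x)) (β.mulVec (α₀.mulVec (φ x)))).re = 0)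
    ∧ (∀ x, diracL α β g ω φ (fun y => α₀.mulVec (φ y)) x
        = ((-2 * ω : ℝ) : ℂ) • α₀.mulVec (φ x)) := by

  classical
  have hφd : Differentiable ℝ φ := hφsmooth.differentiable (by simp)
  -- derivative of α₀ ∘ φ
  have hderiv : ∀ (j : Fin n) (x : Fin n → ℝ),
      pderiv' j (fun y => α₀.mulVec (φ y)) x = α₀.mulVec (pderiv' j φ x) := by
    intro j x
    have hL : HasFDerivAt (fun y => α₀.mulVec (φ y))
        ((((Matrix.mulVecLin α₀).restrictScalars ℝ).toContinuousLinearMap).comp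
          (fderiv ℝ φ x)) x :=
      ((((Matrix.mulVecLin α₀).restrictScalars ℝ).toContinuousLinearMap).hasFDerivAt.comp x
        (hφd x).hasFDerivAt)
    unfold pderiv'
    rw [hL.fderiv]
    rfl
  -- anticommutation at the level of mulVec
  have hacα : ∀ (j : Fin n) (v : Fin N → ℂ),
      (α j).mulVec (α₀.mulVec v) = - α₀.mulVec ((α j).mulVec v) := by
    intro j v
    have h : α j * α₀ = -(α₀ * α j) := by
      rw [eq_neg_iff_add_eq_zero, add_comm]; exact hα₀α j
    rw [Matrix.mulVec_mulVec, Matrix.mulVec_mulVec, h, Matrix.neg_mulVec]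
  have hacβ : ∀ (v : Fin N → ℂ),
      β.mulVec (α₀.mulVec v) = - α₀.mulVec (β.mulVec v) := by
    intro v
    have h : β * α₀ = -(α₀ * β) := by
      rw [eq_neg_iff_add_eq_zero, add_comm]; exact hα₀β
    rw [Matrix.mulVec_mulVec, Matrix.mulVec_mulVec, h, Matrix.neg_mulVec]
  -- claim 1
  have claim1 : ∀ x, diracLminus α β g ω φ (fun y => α₀.mulVec (φ y)) x
      = ((-2 * ω : ℝ) : ℂ) • α₀.mulVec (φ x) := by
    intro x
    have h0 := hsol x
    unfold diracLminus at h0 ⊢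
    simp only [hderiv, hacα, hacβ] at *
    -- move α₀ outside the sum
    have hsum : (∑ j : Fin n, -α₀.mulVec ((α j).mulVec (pderiv' j φ x)))
        = - α₀.mulVec (∑ j : Fin n, (α j).mulVec (pderiv' j φ x)) := by
      rw [Finset.sum_neg_distrib]
      congr 1
      rw [show (∑ j : Fin n, α₀.mulVec ((α j).mulVec (pderiv' j φ x)))
        = ∑ j : Fin n, α₀.mulVecLin ((α j).mulVec (pderiv' j φ x)) from rfl,
        ← map_sum]
      rfl
    rw [hsum]
    have h1 := congrArg (α₀.mulVec) h0
    rw [Matrix.mulVec_zero, Matrix.mulVec_add, Matrix.mulVec_sub,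
      Matrix.mulVec_smul, Matrix.mulVec_smul, Matrix.mulVec_smul] at h1
    funext i
    have h2 := congrFun h1 i
    simp only [Pi.add_apply, Pi.sub_apply, Pi.smul_apply, Pi.neg_apply, Pi.zero_apply,
      smul_eq_mul] at h2 ⊢
    push_cast
    linear_combination -h2
  have claim2 : ∀ x, 2 * (dotProduct (star (φ x)) (β.mulVec (α₀.mulVec (φ x)))).re = 0 := by
    intro x
    set v := φ x with hv
    have hM : Matrix.conjTranspose (β * α₀) = -(β * α₀) := by
      rw [Matrix.conjTranspose_mul, hα₀herm.eq, hβherm.eq, eq_neg_iff_add_eq_zero]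
      exact hα₀β
    set z := dotProduct (star v) (β.mulVec (α₀.mulVec v)) with hz
    have hstar : star z = -z := by
      rw [hz, Matrix.mulVec_mulVec, ← Matrix.star_dotProduct, Matrix.star_mulVec,
        ← Matrix.dotProduct_mulVec, hM, Matrix.neg_mulVec, dotProduct_neg]
    have h1 := congrArg Complex.re hstar
    rw [Complex.neg_re] at h1
    have h2 : (star z).re = z.re := Complex.conj_re z
    rw [h2] at h1
    have : z.re = 0 := by linarith
    rw [this]; ring
  refine ⟨claim1, claim2, ?_⟩
  intro x
  have hre : (dotProduct (star (φ x)) (β.mulVec (α₀.mulVec (φ x)))).re = 0 := by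
    have := claim2 x; linarith
  unfold diracL
  simp only [hre, mul_zero, Complex.ofReal_zero, zero_smul, add_zero]
  exact claim1 x
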